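/- arXiv:2308.15535 — 3 statements merged into one kernel-verified Lean document; each statement's English description precedes it below -/
import Mathlib

section
/- If f : ℝ → ℝ is an analytic function, bounded below, with f(x) ≥ M·x² for all |x| ≥ R (for some constants M, R > 0), attaining its minimum value uniquely at x = 0 with f(0) = 0 and f''(0) > 0, then the limit as N → ∞ of √N · ∫_{-∞}^{∞} exp(−N·f(x)) dx exists and is strictly positive. -/
open MeasureTheory Filter Topology

private lemma sqrt_tendsto_atTop' : Tendsto Real.sqrt atTop atTop := by
  rw [tendsto_atTop_atTop]
  intro b
  refine ⟨(max b 0) ^ 2, fun a ha => ?_⟩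
  calc b ≤ max b 0 := le_max_left _ _
    _ = Real.sqrt ((max b 0) ^ 2) := (Real.sqrt_sq (le_max_right _ _)).symm
    _ ≤ Real.sqrt a := Real.sqrt_le_sqrt ha

private lemma quad_lower_bound
    (f : ℝ → ℝ) (hfc : Continuous f)
    (M R : ℝ) (hM : 0 < M) (hR : 0 < R)
    (hgrowth : ∀ x : ℝ, R ≤ |x| → M * x ^ 2 ≤ f x)
    (hf0 : f 0 = 0)
    (hmin : ∀ x : ℝ, x ≠ 0 → 0 < f x)
    (a : ℝ) (ha : 0 < a)
    (hlim : Tendsto (fun t => f t / t ^ 2) (𝓝[≠] (0:ℝ)) (𝓝 a)) :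
    ∃ c : ℝ, 0 < c ∧ ∀ x : ℝ, c * x ^ 2 ≤ f x := by
  have hev : ∀ᶠ t in 𝓝[≠] (0:ℝ), a / 2 < f t / t ^ 2 :=
    hlim.eventually (eventually_gt_nhds (by linarith))
  rw [eventually_nhdsWithin_iff, Metric.eventually_nhds_iff] at hev
  obtain ⟨δ, hδ, hδf⟩ := hev
  -- on the annulus δ ≤ |x| ≤ R (if nonempty) f has a positive min
  set K : Set ℝ := Set.Icc (-R) R ∩ {x | δ ≤ |x|} with hK_def
  have hKcomp : IsCompact K :=
    isCompact_Icc.inter_right (isClosed_le continuous_const continuous_abs)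
  obtain ⟨m, hm0, hmK⟩ : ∃ m : ℝ, 0 < m ∧ ∀ x ∈ K, m ≤ f x := by
    rcases K.eq_empty_or_nonempty with hKe | hKne
    · exact ⟨1, one_pos, by simp [hKe]⟩
    · obtain ⟨x₀, hx₀K, hx₀min⟩ := hKcomp.exists_isMinOn hKne hfc.continuousOn
      have hx₀ : x₀ ≠ 0 := by
        intro h
        have : δ ≤ |x₀| := hx₀K.2
        rw [h] at this; simp at this; linarith
      exact ⟨f x₀, hmin _ hx₀, fun x hx => hx₀min hx⟩
  refine ⟨min (min (a / 2) (m / R ^ 2)) M, by positivity, fun x => ?_⟩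
  set c := min (min (a / 2) (m / R ^ 2)) M with hc_def
  have hca : c ≤ a / 2 := le_trans (min_le_left _ _) (min_le_left _ _)
  have hcm : c ≤ m / R ^ 2 := le_trans (min_le_left _ _) (min_le_right _ _)
  have hcM : c ≤ M := min_le_right _ _
  have hx2 : (0:ℝ) ≤ x ^ 2 := sq_nonneg x
  rcases le_or_gt R |x| with hxR | hxR
  · calc c * x ^ 2 ≤ M * x ^ 2 := by nlinarith
      _ ≤ f x := hgrowth x hxR
  · rcases lt_or_ge |x| δ with hxδ | hxδ
    · rcases eq_or_ne x 0 with rfl | hx0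
      · simp [hf0]
      · have := hδf (by simpa [Real.dist_eq] using hxδ) (by simpa using hx0)
        have hx2p : (0:ℝ) < x ^ 2 := by positivity
        rw [lt_div_iff₀ hx2p] at this
        nlinarith
    · have hxK : x ∈ K := by
        constructor
        · rw [Set.mem_Icc]
          constructor <;> [linarith [neg_abs_le x]; linarith [le_abs_self x]]
        · exact hxδ
      have hfx : m ≤ f x := hmK x hxK
      have hx2R : x ^ 2 ≤ R ^ 2 := by
        have := abs_le.mp hxR.le
        nlinarith
      calc c * x ^ 2 ≤ (m / R ^ 2) * x ^ 2 := by nlinarith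
        _ ≤ (m / R ^ 2) * R ^ 2 := by
            have : (0:ℝ) < m / R ^ 2 := by positivity
            nlinarith
        _ = m := by field_simp
        _ ≤ f x := hfx

theorem laplace_method_positive_limit
    (f : ℝ → ℝ)
    (hf : AnalyticOn ℝ f Set.univ)
    (hbdd : BddBelow (Set.range f))
    (M R : ℝ) (hM : 0 < M) (hR : 0 < R)
    (hgrowth : ∀ x : ℝ, R ≤ |x| → M * x ^ 2 ≤ f x)
    (hf0 : f 0 = 0)
    (hmin : ∀ x : ℝ, x ≠ 0 → 0 < f x)
    (hf'' : 0 < deriv (deriv f) 0) :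
    ∃ L : ℝ, 0 < L ∧
      Tendsto (fun N : ℕ => Real.sqrt N * ∫ x : ℝ, Real.exp (-(N : ℝ) * f x))
        atTop (nhds L) := by
  -- regularity
  have hC : ContDiff ℝ (⊤ : ℕ∞) f := (analyticOn_univ.mp hf).contDiff
  have hfd : Differentiable ℝ f := hC.differentiable (by simp)
  have hfc : Continuous f := hfd.continuous
  have hfd2 : DifferentiableAt ℝ (deriv f) 0 :=
    (((analyticOn_univ.mp hf).deriv) 0 (Set.mem_univ 0)).differentiableAt
  have fnn : ∀ x, 0 ≤ f x := by
    intro x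
    rcases eq_or_ne x 0 with rfl | h
    · simp [hf0]
    · exact (hmin x h).le
  have hd0 : deriv f 0 = 0 := by
    apply IsLocalMin.deriv_eq_zero
    exact Filter.Eventually.of_forall fun x => by rw [hf0]; exact fnn x
  set a : ℝ := deriv (deriv f) 0 / 2 with ha_def
  have ha : 0 < a := by positivity
  -- the key limit f t / t² → f''(0)/2
  have hlim : Tendsto (fun t => f t / t ^ 2) (𝓝[≠] (0:ℝ)) (𝓝 a) := by
    have hslope : Tendsto (slope (deriv f) 0) (𝓝[≠] (0:ℝ)) (𝓝 (deriv (deriv f) 0)) :=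
      hasDerivAt_iff_tendsto_slope.mp hfd2.hasDerivAt
    apply deriv.lhopital_zero_nhdsNE (g := fun x => x ^ 2)
    · exact eventually_nhdsWithin_of_eventually_nhds (.of_forall fun x => hfd x)
    · filter_upwards [self_mem_nhdsWithin] with x hx
      have hx0 : x ≠ 0 := hx
      simp [deriv_pow, hx0]
    · have := hfc.tendsto 0
      rw [hf0] at this
      exact this.mono_left nhdsWithin_le_nhds
    · have : Tendsto (fun x : ℝ => x ^ 2) (𝓝 0) (𝓝 (0 ^ 2)) :=
        (continuous_pow 2).tendsto 0
      simpa using this.mono_left nhdsWithin_le_nhds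
    · have h2 : Tendsto (fun x => slope (deriv f) 0 x / 2) (𝓝[≠] (0:ℝ)) (𝓝 a) :=
        hslope.div_const 2
      apply h2.congr'
      filter_upwards [self_mem_nhdsWithin] with x hx
      have hx0 : x ≠ 0 := hx
      rw [slope_def_field]
      simp only [hd0, sub_zero, deriv_pow, pow_one]
      rw [div_div, mul_comm]
      norm_num
  -- global quadratic lower bound
  obtain ⟨c, hc, hquad⟩ := quad_lower_bound f hfc M R hM hR hgrowth hf0 hmin a ha hlim
  -- dominated convergence after substitution x = y / √N
  set F : ℕ → ℝ → ℝ :=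
    fun n y => Real.exp (-((n : ℝ) + 1) * f (y * (Real.sqrt ((n : ℝ) + 1))⁻¹)) with hF_def
  have hN : ∀ n : ℕ, (0:ℝ) < (n : ℝ) + 1 := fun n => by positivity
  have ht2 : ∀ (n : ℕ) (y : ℝ),
      (y * (Real.sqrt ((n : ℝ) + 1))⁻¹) ^ 2 = y ^ 2 / ((n : ℝ) + 1) := by
    intro n y
    rw [mul_pow, inv_pow, Real.sq_sqrt (hN n).le, div_eq_mul_inv]
  have key : Tendsto (fun n => ∫ y, F n y) atTop
      (𝓝 (∫ y : ℝ, Real.exp (-a * y ^ 2))) := by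
    apply tendsto_integral_of_dominated_convergence (fun y => Real.exp (-c * y ^ 2))
    · intro n
      exact ((continuous_const.mul (hfc.comp (continuous_mul_right _))).rexp).aestronglyMeasurable
    · exact integrable_exp_neg_mul_sq hc
    · intro n
      apply Eventually.of_forall
      intro y
      rw [Real.norm_eq_abs, Real.abs_exp, Real.exp_le_exp]
      have h1 : c * ((y * (Real.sqrt ((n : ℝ) + 1))⁻¹) ^ 2)
          ≤ f (y * (Real.sqrt ((n : ℝ) + 1))⁻¹) := hquad _
      have h2 := mul_le_mul_of_nonneg_left h1 (hN n).le
      have h3 : ((n : ℝ) + 1) * (c * ((y * (Real.sqrt ((n : ℝ) + 1))⁻¹) ^ 2))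
          = c * y ^ 2 := by
        rw [ht2 n y]
        field_simp
      rw [neg_mul, neg_mul, neg_le_neg_iff]
      linarith
    · apply Eventually.of_forall
      intro y
      rcases eq_or_ne y 0 with rfl | hy
      · simp only [hF_def, zero_mul, hf0, mul_zero, neg_zero, Real.exp_zero]
        simp
      · have hts : Tendsto (fun n : ℕ => y * (Real.sqrt ((n : ℝ) + 1))⁻¹)
            atTop (𝓝[≠] (0:ℝ)) := by
          apply tendsto_nhdsWithin_of_tendsto_nhds_of_eventually_within
          · have hsq : Tendsto (fun n : ℕ => Real.sqrt ((n : ℝ) + 1)) atTop atTop :=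
              sqrt_tendsto_atTop'.comp
                (tendsto_atTop_add_const_right _ 1 tendsto_natCast_atTop_atTop)
            have := hsq.inv_tendsto_atTop.const_mul y
            simpa using this
          · apply Eventually.of_forall
            intro n
            have : Real.sqrt ((n : ℝ) + 1) ≠ 0 := by positivity
            simp [Set.mem_compl_singleton_iff, hy, this]
        have hcomp : Tendsto (fun n : ℕ =>
            f (y * (Real.sqrt ((n : ℝ) + 1))⁻¹) /
              (y * (Real.sqrt ((n : ℝ) + 1))⁻¹) ^ 2) atTop (𝓝 a) := hlim.comp hts
        have hfin := ((hcomp.mul_const (y ^ 2)).neg).rexp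
        rw [show (-a * y ^ 2 : ℝ) = -(a * y ^ 2) by ring]
        apply hfin.congr
        intro n
        have ht : (y * (Real.sqrt ((n : ℝ) + 1))⁻¹) ^ 2 = y ^ 2 / ((n : ℝ) + 1) :=
          ht2 n y
        have hid : f (y * (Real.sqrt ((n : ℝ) + 1))⁻¹) /
            (y * (Real.sqrt ((n : ℝ) + 1))⁻¹) ^ 2 * y ^ 2
            = ((n : ℝ) + 1) * f (y * (Real.sqrt ((n : ℝ) + 1))⁻¹) := by
          rw [ht]
          have hy2 : y ^ 2 ≠ 0 := pow_ne_zero _ hy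
          field_simp
        simp only [hF_def, hid, neg_mul]
  -- change of variables
  have hint : ∀ n : ℕ, (∫ y, F n y)
      = Real.sqrt ((n : ℝ) + 1) * ∫ x : ℝ, Real.exp (-((n : ℝ) + 1) * f x) := by
    intro n
    have := MeasureTheory.Measure.integral_comp_inv_mul_right
      (fun x : ℝ => Real.exp (-((n : ℝ) + 1) * f x)) (Real.sqrt ((n : ℝ) + 1))
    simp only [hF_def] at *
    rw [this, abs_of_nonneg (Real.sqrt_nonneg _), smul_eq_mul]
  refine ⟨∫ y : ℝ, Real.exp (-a * y ^ 2), ?_, ?_⟩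
  · rw [integral_gaussian]
    exact Real.sqrt_pos.mpr (div_pos Real.pi_pos ha)
  · rw [← tendsto_add_atTop_iff_nat 1]
    apply key.congr
    intro n
    rw [hint n]
    norm_cast
end

section
/- For all real x ≥ 0, the modified Bessel functions satisfy I₁(x)² ≥ I₀(x)·I₂(x), hence (I₁(x)/I₀(x))² ≥ I₂(x)/I₀(x) for x > 0. In particular r₁(x)² > r₂(x)/2 for x > 0, where r_ν(x) = I_ν(x)/I₀(x). -/
/-- Modified Bessel function of the first kind of natural order ν. -/
noncomputable def besselI (ν : ℕ) (x : ℝ) : ℝ :=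
  ∑' n : ℕ, (x / 2) ^ (2 * n + ν) / ((Nat.factorial n : ℝ) * (Nat.factorial (n + ν) : ℝ))

open Finset Finset.Nat

namespace BesselTuran

lemma summable_norm (t : ℝ) (ν : ℕ) :
    Summable fun n : ℕ => ‖t ^ (2 * n + ν) / ((Nat.factorial n : ℝ) * (Nat.factorial (n + ν) : ℝ))‖ := by
  have hs : Summable fun n : ℕ => |t| ^ ν * ((|t| ^ 2) ^ n / (Nat.factorial n : ℝ)) :=
    (Real.summable_pow_div_factorial (|t| ^ 2)).mul_left _
  refine hs.of_nonneg_of_le (fun n => norm_nonneg _) (fun n => ?_)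
  rw [norm_div, Real.norm_eq_abs, Real.norm_eq_abs, abs_pow, abs_mul]
  have hfp : (0:ℝ) < (Nat.factorial n : ℝ) := by exact_mod_cast Nat.factorial_pos n
  have hfp2 : (1:ℝ) ≤ (Nat.factorial (n + ν) : ℝ) := by
    exact_mod_cast Nat.one_le_iff_ne_zero.mpr (Nat.factorial_pos (n + ν)).ne'
  have hfac : ((Nat.factorial n : ℝ)) ≤ |(Nat.factorial n : ℝ)| * |(Nat.factorial (n + ν) : ℝ)| := by
    rw [abs_of_nonneg (by positivity), abs_of_nonneg (by positivity)]
    nlinarith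
  calc |t| ^ (2 * n + ν) / (|(Nat.factorial n : ℝ)| * |(Nat.factorial (n + ν) : ℝ)|)
      ≤ |t| ^ (2 * n + ν) / (Nat.factorial n : ℝ) :=
        div_le_div_of_nonneg_left (by positivity) hfp hfac
    _ = |t| ^ ν * ((|t| ^ 2) ^ n / (Nat.factorial n : ℝ)) := by
        rw [← pow_mul, ← mul_div_assoc, ← pow_add]
        ring_nf

lemma summable_term (t : ℝ) (ν : ℕ) :
    Summable fun n : ℕ => t ^ (2 * n + ν) / ((Nat.factorial n : ℝ) * (Nat.factorial (n + ν) : ℝ)) :=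
  (summable_norm t ν).of_norm

lemma coeff_id1 (k m n : ℕ) (h : m + n = k) :
    (1:ℝ)/((Nat.factorial m : ℝ) * (Nat.factorial (m+1))) *
      (1/((Nat.factorial n : ℝ) * (Nat.factorial (n+1)))) =
      ((k+1).choose m * (k+1).choose n : ℕ) /
        ((Nat.factorial (k+1) : ℝ) * (Nat.factorial (k+1))) := by
  have hm : m ≤ k + 1 := by omega
  have hn : n ≤ k + 1 := by omega
  rw [Nat.cast_mul, Nat.cast_choose ℝ hm, Nat.cast_choose ℝ hn]
  have e1 : k + 1 - m = n + 1 := by omega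
  have e2 : k + 1 - n = m + 1 := by omega
  rw [e1, e2]
  field_simp

lemma coeff_id2 (k m n : ℕ) (h : m + n = k) :
    (1:ℝ)/((Nat.factorial m : ℝ) * (Nat.factorial (m+0))) *
      (1/((Nat.factorial n : ℝ) * (Nat.factorial (n+2)))) =
      ((k+2).choose m * k.choose n : ℕ) /
        ((Nat.factorial k : ℝ) * (Nat.factorial (k+2))) := by
  have hm : m ≤ k + 2 := by omega
  have hn : n ≤ k := by omega
  rw [Nat.cast_mul, Nat.cast_choose ℝ hm, Nat.cast_choose ℝ hn]
  have e1 : k + 2 - m = n + 2 := by omega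
  have e2 : k - n = m := by omega
  rw [e1, e2]
  field_simp
  ring

lemma coeff_le (k : ℕ) :
    ∑ p ∈ antidiagonal k, (1:ℝ)/((Nat.factorial p.1 : ℝ) * (Nat.factorial (p.1+0))) *
        (1/((Nat.factorial p.2 : ℝ) * (Nat.factorial (p.2+2))))
    ≤ ∑ p ∈ antidiagonal k, (1:ℝ)/((Nat.factorial p.1 : ℝ) * (Nat.factorial (p.1+1))) *
        (1/((Nat.factorial p.2 : ℝ) * (Nat.factorial (p.2+1)))) := by
  have h2 : ∑ p ∈ antidiagonal k, (1:ℝ)/((Nat.factorial p.1 : ℝ) * (Nat.factorial (p.1+0))) *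
        (1/((Nat.factorial p.2 : ℝ) * (Nat.factorial (p.2+2))))
      = ((k+2+k).choose k : ℕ) / ((Nat.factorial k : ℝ) * (Nat.factorial (k+2))) := by
    rw [Nat.add_choose_eq, Nat.cast_sum, Finset.sum_div]
    refine Finset.sum_congr rfl fun p hp => ?_
    exact coeff_id2 k p.1 p.2 (Finset.HasAntidiagonal.mem_antidiagonal.mp hp)
  have h1 : ∑ p ∈ antidiagonal k, (1:ℝ)/((Nat.factorial p.1 : ℝ) * (Nat.factorial (p.1+1))) *
        (1/((Nat.factorial p.2 : ℝ) * (Nat.factorial (p.2+1))))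
      = ((k+1+(k+1)).choose k : ℕ) / ((Nat.factorial (k+1) : ℝ) * (Nat.factorial (k+1))) := by
    rw [Nat.add_choose_eq, Nat.cast_sum, Finset.sum_div]
    refine Finset.sum_congr rfl fun p hp => ?_
    exact coeff_id1 k p.1 p.2 (Finset.HasAntidiagonal.mem_antidiagonal.mp hp)
  rw [h1, h2]
  have hEq : k + 2 + k = k + 1 + (k + 1) := by omega
  rw [hEq]
  apply div_le_div_of_nonneg_left (by positivity) (by positivity)
  have e2 : ((Nat.factorial (k+2)) : ℝ) = (k+2) * (Nat.factorial (k+1)) := by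
    rw [Nat.factorial_succ]; push_cast; ring
  have e1 : ((Nat.factorial (k+1)) : ℝ) = (k+1) * (Nat.factorial k) := by
    rw [Nat.factorial_succ]; push_cast; ring
  have hk : (0:ℝ) < (Nat.factorial k : ℝ) := by exact_mod_cast Nat.factorial_pos k
  nlinarith [hk]

lemma turan (x : ℝ) (hx : 0 ≤ x) :
    besselI 0 x * besselI 2 x ≤ (besselI 1 x) ^ 2 := by
  set t : ℝ := x / 2 with ht
  have ht0 : 0 ≤ t := by positivity
  set f : ℕ → ℕ → ℝ := fun ν n => t ^ (2 * n + ν) / ((Nat.factorial n : ℝ) * (Nat.factorial (n + ν) : ℝ)) with hf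
  have hB : ∀ ν, besselI ν x = ∑' n, f ν n := fun ν => rfl
  have hnorm : ∀ ν, Summable fun n => ‖f ν n‖ := fun ν => summable_norm t ν
  have hprod02 : besselI 0 x * besselI 2 x =
      ∑' k, ∑ p ∈ antidiagonal k, f 0 p.1 * f 2 p.2 := by
    rw [hB 0, hB 2]
    exact tsum_mul_tsum_eq_tsum_sum_antidiagonal_of_summable_norm (hnorm 0) (hnorm 2)
  have hprod11 : (besselI 1 x) ^ 2 =
      ∑' k, ∑ p ∈ antidiagonal k, f 1 p.1 * f 1 p.2 := by
    rw [sq, hB 1]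
    exact tsum_mul_tsum_eq_tsum_sum_antidiagonal_of_summable_norm (hnorm 1) (hnorm 1)
  rw [hprod02, hprod11]
  have key : ∀ k : ℕ, ∑ p ∈ antidiagonal k, f 0 p.1 * f 2 p.2 ≤
      ∑ p ∈ antidiagonal k, f 1 p.1 * f 1 p.2 := by
    intro k
    have e2 : ∑ p ∈ antidiagonal k, f 0 p.1 * f 2 p.2 =
        t ^ (2*k+2) * ∑ p ∈ antidiagonal k, (1:ℝ)/((Nat.factorial p.1 : ℝ) * (Nat.factorial (p.1+0))) *
          (1/((Nat.factorial p.2 : ℝ) * (Nat.factorial (p.2+2)))) := by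
      rw [Finset.mul_sum]
      refine Finset.sum_congr rfl fun p hp => ?_
      have hpk : p.1 + p.2 = k := Finset.HasAntidiagonal.mem_antidiagonal.mp hp
      simp only [hf]
      rw [div_mul_div_comm, ← pow_add]
      have : 2 * p.1 + 0 + (2 * p.2 + 2) = 2 * k + 2 := by omega
      rw [this]
      field_simp
    have e1 : ∑ p ∈ antidiagonal k, f 1 p.1 * f 1 p.2 =
        t ^ (2*k+2) * ∑ p ∈ antidiagonal k, (1:ℝ)/((Nat.factorial p.1 : ℝ) * (Nat.factorial (p.1+1))) *
          (1/((Nat.factorial p.2 : ℝ) * (Nat.factorial (p.2+1)))) := by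
      rw [Finset.mul_sum]
      refine Finset.sum_congr rfl fun p hp => ?_
      have hpk : p.1 + p.2 = k := Finset.HasAntidiagonal.mem_antidiagonal.mp hp
      simp only [hf]
      rw [div_mul_div_comm, ← pow_add]
      have : 2 * p.1 + 1 + (2 * p.2 + 1) = 2 * k + 2 := by omega
      rw [this]
      field_simp
    rw [e1, e2]
    exact mul_le_mul_of_nonneg_left (coeff_le k) (by positivity)
  refine Summable.tsum_le_tsum key ?_ ?_
  · exact summable_sum_mul_antidiagonal_of_summable_norm' (hnorm 0) ((hnorm 0).of_norm)
      (hnorm 2) ((hnorm 2).of_norm)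
  · exact summable_sum_mul_antidiagonal_of_summable_norm' (hnorm 1) ((hnorm 1).of_norm)
      (hnorm 1) ((hnorm 1).of_norm)

lemma besselI_zero_pos (x : ℝ) (hx : 0 ≤ x) : 0 < besselI 0 x := by
  have h := Summable.le_tsum (summable_term (x/2) 0) 0 (fun i _ => by positivity)
  simp only [Nat.mul_zero, Nat.zero_add, pow_zero] at h
  calc (0:ℝ) < 1 := one_pos
    _ = (1:ℝ) / ((Nat.factorial 0 : ℝ) * (Nat.factorial (0+0))) := by norm_num [Nat.factorial]
    _ ≤ besselI 0 x := h

lemma besselI_two_pos (x : ℝ) (hx : 0 < x) : 0 < besselI 2 x := by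
  have h := Summable.le_tsum (summable_term (x/2) 2) 0 (fun i _ => by positivity)
  have h0 : (0:ℝ) < (x/2) ^ (2*0+2) / ((Nat.factorial 0 : ℝ) * (Nat.factorial (0+2))) := by
    positivity
  exact lt_of_lt_of_le h0 h

end BesselTuran

theorem besselI_turan_inequality :
    (∀ x : ℝ, 0 ≤ x → besselI 0 x * besselI 2 x ≤ (besselI 1 x) ^ 2) ∧
    (∀ x : ℝ, 0 < x → besselI 2 x / besselI 0 x ≤ (besselI 1 x / besselI 0 x) ^ 2) ∧
    (∀ x : ℝ, 0 < x →
      (besselI 2 x / besselI 0 x) / 2 < (besselI 1 x / besselI 0 x) ^ 2) := by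
  have hratio : ∀ x : ℝ, 0 < x → besselI 2 x / besselI 0 x ≤ (besselI 1 x / besselI 0 x) ^ 2 := by
    intro x hx
    have h0 := BesselTuran.besselI_zero_pos x hx.le
    have h := BesselTuran.turan x hx.le
    rw [div_pow, div_le_div_iff₀ h0 (by positivity)]
    nlinarith
  refine ⟨fun x hx => BesselTuran.turan x hx, hratio, fun x hx => ?_⟩
  have h0 := BesselTuran.besselI_zero_pos x hx.le
  have h2 := BesselTuran.besselI_two_pos x hx
  have hpos : 0 < besselI 2 x / besselI 0 x := div_pos h2 h0
  calc (besselI 2 x / besselI 0 x) / 2 < besselI 2 x / besselI 0 x := half_lt_self hpos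
    _ ≤ (besselI 1 x / besselI 0 x) ^ 2 := hratio x hx
end

section
/- Let f : ℝⁿ → ℝ be continuous, attain its minimum m on ℝⁿ, and satisfy f(x) → ∞ as |x| → ∞ (coercive). Then lim_{V→∞} (−1/(βV))·log ∫_{ℝⁿ} exp(−βV·f(x)) dx = m, for any fixed β > 0. -/
open MeasureTheory Filter

lemma gauss_integrable (n : ℕ) {b : ℝ} (hb : 0 < b) :
    Integrable (fun x : EuclideanSpace ℝ (Fin n) => Real.exp (-b * ‖x‖ ^ 2)) := by
  have h := GaussianFourier.integrable_cexp_neg_mul_sq_norm_add (V := EuclideanSpace ℝ (Fin n))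
    (b := (b : ℂ)) (by simpa using hb) 0 0
  refine h.norm.congr ?_
  filter_upwards with x
  rw [Complex.norm_exp]
  norm_num
  left
  norm_cast

lemma exp_f_integrable (n : ℕ) (f : EuclideanSpace ℝ (Fin n) → ℝ)
    (hf : Continuous f) (c C : ℝ) (hc : 0 < c)
    (hquad : ∀ x, c * ‖x‖ ^ 2 - C ≤ f x) {a : ℝ} (ha : 0 < a) :
    Integrable (fun x => Real.exp (-a * f x)) := by
  have hg := (gauss_integrable n (b := a * c) (by positivity)).const_mul (Real.exp (a * C))
  refine hg.mono ?_ ?_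
  · exact (Real.continuous_exp.comp ((continuous_const.mul hf))).aestronglyMeasurable
  · filter_upwards with x
    rw [Real.norm_eq_abs, Real.norm_eq_abs, abs_of_nonneg (Real.exp_nonneg _),
      abs_of_nonneg (by positivity), ← Real.exp_add]
    apply Real.exp_le_exp.2
    nlinarith [hquad x]

theorem free_energy_limit_eq_min
    (n : ℕ) (f : EuclideanSpace ℝ (Fin n) → ℝ) (m β : ℝ) (hβ : 0 < β)
    (hf : Continuous f)
    (hmin : ∀ x, m ≤ f x) (hattain : ∃ x₀, f x₀ = m)
    (hcoercive : Tendsto f (cocompact _) atTop)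
    (c C : ℝ) (hc : 0 < c) (hC : 0 < C)
    (hquad : ∀ x, c * ‖x‖ ^ 2 - C ≤ f x) :
    Tendsto
      (fun V : ℝ =>
        -(1 / (β * V)) * Real.log (∫ x, Real.exp (-(β * V) * f x)))
      atTop (nhds m) := by
  set J : ℝ → ℝ := fun V => ∫ x, Real.exp (-(β * V) * (f x - m)) with hJ
  have hVtop : Tendsto (fun V : ℝ => β * V) atTop atTop :=
    Tendsto.const_mul_atTop hβ tendsto_id
  have hintg : ∀ V : ℝ, 0 < V → Integrable (fun x => Real.exp (-(β * V) * (f x - m))) := by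
    intro V hV0
    have h := (exp_f_integrable n f hf c C hc hquad (a := β * V)
      (by positivity)).const_mul (Real.exp (β * V * m))
    refine h.congr ?_
    filter_upwards with x
    rw [← Real.exp_add]
    ring_nf
  have hJpos : ∀ V : ℝ, 0 < V → 0 < J V := by
    intro V hV0
    rw [hJ, integral_pos_iff_support_of_nonneg (fun x => Real.exp_nonneg _) (hintg V hV0)]
    have : (Function.support fun x : EuclideanSpace ℝ (Fin n) =>
        Real.exp (-(β * V) * (f x - m))) = Set.univ := by
      ext x; simp [Function.mem_support, Real.exp_ne_zero]
    rw [this]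
    have h1 : (0 : ENNReal) < volume (Metric.ball (0 : EuclideanSpace ℝ (Fin n)) 1) :=
      Metric.measure_ball_pos _ _ one_pos
    exact h1.trans_le (measure_mono (Set.subset_univ _))
  have hJmono : ∀ V : ℝ, 1 ≤ V → J V ≤ J 1 := by
    intro V hV1
    refine integral_mono (hintg V (by linarith)) (hintg 1 (by linarith)) fun x => ?_
    apply Real.exp_le_exp.2
    have h1 : m ≤ f x := hmin x
    have h2 : β * 1 ≤ β * V := by nlinarith
    nlinarith [mul_le_mul_of_nonneg_right h2 (by linarith : (0:ℝ) ≤ f x - m)]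
  -- key: log (J V) / (β V) → 0
  have key : Tendsto (fun V => Real.log (J V) / (β * V)) atTop (nhds 0) := by
    rw [Metric.tendsto_nhds]
    intro ε hε
    have hupper : ∀ᶠ V in atTop, Real.log (J V) / (β * V) < ε := by
      have hB : Tendsto (fun V : ℝ => Real.log (J 1) / (β * V)) atTop (nhds 0) :=
        Tendsto.div_atTop tendsto_const_nhds hVtop
      filter_upwards [hB.eventually_lt_const hε, eventually_ge_atTop (1 : ℝ)] with V h1 h2
      refine lt_of_le_of_lt ?_ h1
      have hβV : 0 < β * V := by positivity
      exact div_le_div_of_nonneg_right (Real.log_le_log (hJpos V (by linarith)) (hJmono V h2))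
        hβV.le |>.trans_eq rfl
    have hlower : ∀ᶠ V in atTop, -ε < Real.log (J V) / (β * V) := by
      obtain ⟨x₀, hx₀⟩ := hattain
      have hev : ∀ᶠ x in nhds x₀, f x < m + ε / 2 := by
        have := hf.continuousAt (x := x₀)
        rw [ContinuousAt, hx₀] at this
        exact this.eventually_lt_const (by linarith)
      obtain ⟨δ, hδpos, hδ⟩ := Metric.eventually_nhds_iff_ball.mp hev
      set K : ℝ := (volume (Metric.ball x₀ δ)).toReal with hKdef
      have hK : 0 < K :=
        ENNReal.toReal_pos (Metric.measure_ball_pos _ _ hδpos).ne' measure_ball_lt_top.ne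
      have hlb : ∀ V : ℝ, 0 < V → Real.exp (-(β * V) * (ε / 2)) * K ≤ J V := by
        intro V hV0
        have hβV : 0 < β * V := by positivity
        have hball : ∫ _ in Metric.ball x₀ δ, Real.exp (-(β * V) * (ε / 2)) ≤
            ∫ x in Metric.ball x₀ δ, Real.exp (-(β * V) * (f x - m)) := by
          refine setIntegral_mono_on (integrableOn_const measure_ball_lt_top.ne)
            ((hintg V hV0).integrableOn) measurableSet_ball fun x hx => ?_
          apply Real.exp_le_exp.2
          have := hδ x hx
          nlinarith
        have hfull : ∫ x in Metric.ball x₀ δ, Real.exp (-(β * V) * (f x - m)) ≤ J V :=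
          setIntegral_le_integral (hintg V hV0) (Eventually.of_forall fun x => Real.exp_nonneg _)
        calc Real.exp (-(β * V) * (ε / 2)) * K = K * Real.exp (-(β * V) * (ε / 2)) := mul_comm _ _
          _ = ∫ _ in Metric.ball x₀ δ, Real.exp (-(β * V) * (ε / 2)) := by
              rw [setIntegral_const, smul_eq_mul]; rfl
          _ ≤ J V := hball.trans hfull
      have hB2 : Tendsto (fun V : ℝ => -(ε / 2) + Real.log K / (β * V)) atTop
          (nhds (-(ε / 2))) := by
        have := (tendsto_const_nhds (x := -(ε / 2)) (f := atTop (α := ℝ))).add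
          (Tendsto.div_atTop (tendsto_const_nhds (x := Real.log K)) hVtop)
        simpa using this
      filter_upwards [hB2.eventually_const_lt (by linarith : -ε < -(ε / 2)),
        eventually_gt_atTop (0 : ℝ)] with V h1 hV0
      refine h1.trans_le ?_
      have hβV : 0 < β * V := by positivity
      have hlog : -(β * V) * (ε / 2) + Real.log K ≤ Real.log (J V) := by
        have := Real.log_le_log (by positivity) (hlb V hV0)
        rwa [Real.log_mul (Real.exp_ne_zero _) hK.ne', Real.log_exp] at this
      have heq : (-(β * V) * (ε / 2) + Real.log K) / (β * V) =
          -(ε / 2) + Real.log K / (β * V) := by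
        field_simp
      calc -(ε / 2) + Real.log K / (β * V) = (-(β * V) * (ε / 2) + Real.log K) / (β * V) :=
            heq.symm
        _ ≤ Real.log (J V) / (β * V) := div_le_div_of_nonneg_right hlog hβV.le |>.trans_eq rfl
    filter_upwards [hupper, hlower] with V h1 h2
    rw [Real.dist_eq, sub_zero, abs_lt]
    exact ⟨h2, h1⟩
  have heq : ∀ᶠ V in atTop,
      m - Real.log (J V) / (β * V) =
        -(1 / (β * V)) * Real.log (∫ x, Real.exp (-(β * V) * f x)) := by
    filter_upwards [eventually_gt_atTop (0 : ℝ)] with V hV0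
    have hβV : 0 < β * V := by positivity
    have hZ : (∫ x, Real.exp (-(β * V) * f x)) = Real.exp (-(β * V) * m) * J V := by
      have hJV : J V = ∫ x, Real.exp (-(β * V) * (f x - m)) := rfl
      rw [hJV, ← integral_const_mul]
      congr 1
      funext x
      rw [← Real.exp_add]
      ring_nf
    rw [hZ, Real.log_mul (Real.exp_ne_zero _) (hJpos V hV0).ne', Real.log_exp]
    field_simp
    ring
  have hlim : Tendsto (fun V => m - Real.log (J V) / (β * V)) atTop (nhds m) := by
    have := (tendsto_const_nhds (x := m) (f := atTop (α := ℝ))).sub key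
    simpa using this
  exact hlim.congr' heq
end
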